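/- Let q ≥ 2 have prime factorization q = p_1^{a_1} ⋯ p_r^{a_r} with r ≥ 2 and p_1 < p_2 < ⋯ < p_r. Then −1 is an adjacency eigenvalue of the Lee graph G(n,q) for every integer n satisfying n > (−1 + (2p_1 − 1)(p_2 − 1))/2 if q is even, and for every integer n satisfying n > (−1 + (p_1 − 1)(p_2 − 1))/2 if q is odd. -/

import Mathlib

open Finset Polynomial

/-- The `t`-th power graph: vertices are adjacent when they are distinct and at
graph (geodesic) distance at most `t` in `G`. -/
def powerGraph {V : Type*} (G : SimpleGraph V) (t : ℕ) : SimpleGraph V where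
  Adj u v := u ≠ v ∧ G.Reachable u v ∧ G.dist u v ≤ t
  symm := by
    constructor
    rintro u v ⟨h1, h2, h3⟩
    exact ⟨h1.symm, h2.symm, by rwa [SimpleGraph.dist_comm]⟩
  loopless := ⟨fun v h => h.1 rfl⟩

/-- The distance-`t` chromatic number of a graph. -/
noncomputable def distChromaticNumber {V : Type*} (G : SimpleGraph V) (t : ℕ) : ℕ∞ :=
  (powerGraph G t).chromaticNumber

/-- `x` is an eigenvalue of the (real) adjacency matrix of `G`. -/
def IsAdjEigenvalue {V : Type*} [Fintype V] [DecidableEq V] (G : SimpleGraph V)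
    [DecidableRel G.Adj] (x : ℝ) : Prop :=
  ∃ v : V → ℝ, v ≠ 0 ∧ (SimpleGraph.adjMatrix ℝ G).mulVec v = x • v

/-- The hypercube graph `Q_n`. -/
def hypercube (n : ℕ) : SimpleGraph (Fin n → Fin 2) where
  Adj u v := hammingDist u v = 1
  symm := ⟨fun u v h => by simpa [hammingDist_comm] using h⟩
  loopless := ⟨fun u h => by simp only [hammingDist_self] at h; exact absurd h (by norm_num)⟩

noncomputable instance (n : ℕ) : DecidableRel (hypercube n).Adj :=
  fun _ _ => Classical.dec _

/-- The Lee graph `G(n,q)`: the `n`-fold Cartesian product of the `q`-cycle. -/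
def leeGraph (n q : ℕ) : SimpleGraph (Fin n → ZMod q) where
  Adj u v := u ≠ v ∧ ∃ i, (u i = v i + 1 ∨ v i = u i + 1) ∧ ∀ j, j ≠ i → u j = v j
  symm := by
    constructor
    rintro u v ⟨hne, i, h, hj⟩
    exact ⟨hne.symm, i, h.symm, fun j hji => (hj j hji).symm⟩
  loopless := ⟨fun u h => h.1 rfl⟩

noncomputable instance (n q : ℕ) : DecidableRel (leeGraph n q).Adj :=
  fun _ _ => Classical.dec _

/-- The Lee distance on `(ℤ/qℤ)^n`. -/
def leeDist {n q : ℕ} (b c : Fin n → ZMod q) : ℕ :=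
  ∑ i, min ((b i - c i).val) (q - (b i - c i).val)

lemma lee_eigen (q : ℕ) [NeZero q] (hq : 3 ≤ q) (χ : AddChar (ZMod q) ℂ)
    (n : ℕ) (z : Fin n → ZMod q)
    (hsum : ∑ i, (χ (z i) + χ (-(z i))) = -1) :
    IsAdjEigenvalue (leeGraph n q) (-1) := by
  haveI : Fact (1 < q) := ⟨by omega⟩
  have h2 : ((2:ℕ) : ZMod q) ≠ 0 := by
    intro h; rw [ZMod.natCast_eq_zero_iff] at h; exact absurd (Nat.le_of_dvd (by norm_num) h) (by omega)
  have hq2 : (1 : ZMod q) ≠ -1 := by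
    intro h; apply h2; push_cast; linear_combination h
  set ε : Bool → ZMod q := fun b => cond b 1 (-1) with hε
  have hε0 : ∀ b, ε b ≠ 0 := by
    intro b; cases b <;> simp [hε]
  have hεinj : Function.Injective ε := by
    intro b b' h
    cases b <;> cases b'
    · rfl
    · exact absurd (show (1 : ZMod q) = -1 from h.symm) hq2
    · exact absurd (show (1 : ZMod q) = -1 from h) hq2
    · rfl
  classical
  set Φ : (Fin n → ZMod q) → ℂ := fun x => χ (∑ i, z i * x i) with hΦ
  have key : ∀ x, ∑ y ∈ (leeGraph n q).neighborFinset x, Φ y = - Φ x := by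
    intro x
    set F : Fin n × Bool → (Fin n → ZMod q) :=
      fun ib => Function.update x ib.1 (x ib.1 + ε ib.2) with hF
    have hFx : ∀ i b j, F (i, b) j = if j = i then x i + ε b else x j := by
      intro i b j
      by_cases hj : j = i
      · subst hj; simp [hF]
      · simp [hF, Function.update_of_ne hj, hj]
    have hFinj : Function.Injective F := by
      rintro ⟨i, b⟩ ⟨i', b'⟩ h
      by_cases hii : i = i'
      · subst hii
        have h1 := congrFun h i
        rw [hFx, hFx, if_pos rfl, if_pos rfl] at h1
        have := hεinj (add_left_cancel h1)
        rw [this]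
      · have h1 := congrFun h i
        rw [hFx, hFx, if_pos rfl, if_neg hii] at h1
        exact absurd (by linear_combination h1 : ε b = 0) (hε0 b)
    have himg : (leeGraph n q).neighborFinset x = Finset.image F Finset.univ := by
      ext y
      simp only [SimpleGraph.mem_neighborFinset, Finset.mem_image, Finset.mem_univ, true_and]
      constructor
      · intro hadj
        obtain ⟨hne, i, hcase, hother⟩ : x ≠ y ∧ ∃ i, (x i = y i + 1 ∨ y i = x i + 1) ∧
          ∀ j, j ≠ i → x j = y j := hadj
        rcases hcase with hc | hc
        · refine ⟨(i, false), funext fun j => ?_⟩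
          rw [hFx]
          by_cases hj : j = i
          · subst hj
            rw [if_pos rfl]
            show x j + (-1 : ZMod q) = y j
            linear_combination hc
          · rw [if_neg hj]; exact hother j hj
        · refine ⟨(i, true), funext fun j => ?_⟩
          rw [hFx]
          by_cases hj : j = i
          · subst hj
            rw [if_pos rfl]
            show x j + (1 : ZMod q) = y j
            linear_combination -hc
          · rw [if_neg hj]; exact hother j hj
      · rintro ⟨⟨i, b⟩, rfl⟩
        refine (⟨fun hcon => ?_, i, ?_, fun j hj => ((hFx i b j).trans (if_neg hj)).symm⟩ :
          x ≠ F (i, b) ∧ ∃ i', (x i' = F (i, b) i' + 1 ∨ F (i, b) i' = x i' + 1) ∧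
            ∀ j, j ≠ i' → x j = F (i, b) j)
        · have hthis := (congrFun hcon i).trans ((hFx i b i).trans (if_pos rfl))
          exact hε0 b (by linear_combination -hthis)
        · have hFi : F (i, b) i = x i + ε b := (hFx i b i).trans (if_pos rfl)
          cases b
          · left
            rw [hFi]
            show x i = x i + (-1 : ZMod q) + 1
            ring
          · right
            rw [hFi]
            rfl
    have hval : ∀ (i : Fin n) (b : Bool), Φ (F (i, b)) = Φ x * χ (z i * ε b) := by
      intro i b
      have hs : (∑ j, z j * (F (i, b)) j) = (∑ j, z j * x j) + z i * ε b := by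
        have : ∀ j, z j * (F (i, b)) j = z j * x j + if j = i then z i * ε b else 0 := by
          intro j
          rw [hFx]
          by_cases hj : j = i
          · subst hj; rw [if_pos rfl, if_pos rfl]; ring
          · rw [if_neg hj, if_neg hj, add_zero]
        rw [Finset.sum_congr rfl fun j _ => this j, Finset.sum_add_distrib,
          Finset.sum_ite_eq' Finset.univ i (fun _ => z i * ε b)]
        rw [if_pos (Finset.mem_univ i)]
      show χ (∑ j, z j * (F (i, b)) j) = Φ x * χ (z i * ε b)
      rw [hs, AddChar.map_add_eq_mul]
    rw [himg, Finset.sum_image fun a _ b _ h => hFinj h, Fintype.sum_prod_type]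
    have : ∀ i : Fin n, ∑ b : Bool, Φ (F (i, b)) = Φ x * (χ (z i) + χ (- z i)) := by
      intro i
      rw [Fintype.sum_bool, hval, hval]
      show Φ x * χ (z i * 1) + Φ x * χ (z i * (-1)) = _
      rw [mul_one, mul_neg_one]
      ring
    rw [Finset.sum_congr rfl fun i _ => this i, ← Finset.mul_sum, hsum]
    ring
  refine ⟨fun x => (Φ x).re, fun h0 => ?_, funext fun x => ?_⟩
  · have h1 := congrFun h0 0
    have : Φ 0 = 1 := by
      show χ (∑ i, z i * (0 : Fin n → ZMod q) i) = 1
      simp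
    rw [this] at h1
    simpa using h1
  · rw [SimpleGraph.adjMatrix_mulVec_apply, ← Complex.re_sum, key x]
    simp

lemma exists_char (q : ℕ) [NeZero q] :
    ∃ χ : AddChar (ZMod q) ℂ, ∀ x : ZMod q, χ x = 1 ↔ x = 0 := by
  have hq0 : q ≠ 0 := NeZero.ne q
  have hprim := Complex.isPrimitiveRoot_exp q hq0
  refine ⟨AddChar.zmodChar q hprim.pow_eq_one, fun x => ?_⟩
  rw [AddChar.zmodChar_apply, hprim.pow_eq_one_iff_dvd]
  constructor
  · intro h
    have hlt := ZMod.val_lt x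
    have hv : x.val = 0 := by
      rcases Nat.eq_zero_or_pos x.val with h0 | hpos
      · exact h0
      · exact absurd (Nat.le_of_dvd hpos h) (by omega)
    exact (ZMod.val_eq_zero x).mp hv
  · rintro rfl; simp

lemma half_block (q : ℕ) [NeZero q] (χ : AddChar (ZMod q) ℂ)
    (hχ : ∀ x : ZMod q, χ x = 1 ↔ x = 0)
    (p : ℕ) (hp : p.Prime) (hodd : Odd p) (hdvd : p ∣ q) :
    ∑ j ∈ Finset.range ((p - 1) / 2),
      (χ (((j+1) * (q/p) : ℕ) : ZMod q) + χ (-(((j+1) * (q/p) : ℕ) : ZMod q))) = -1 := by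
  have hq0 : 0 < q := Nat.pos_of_ne_zero (NeZero.ne q)
  have hp2 : 2 ≤ p := hp.two_le
  have hgpos : 0 < q / p := Nat.div_pos (Nat.le_of_dvd hq0 hdvd) (by omega)
  have hglt : q / p < q := Nat.div_lt_self hq0 (by omega)
  have hg0 : ((q/p : ℕ) : ZMod q) ≠ 0 := by
    intro h
    rw [ZMod.natCast_eq_zero_iff] at h
    exact absurd (Nat.le_of_dvd hgpos h) (by omega)
  set ξ : ℂ := χ (((q/p : ℕ) : ZMod q)) with hξ
  have hpow : ∀ m : ℕ, χ (((m * (q/p) : ℕ) : ZMod q)) = ξ ^ m := by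
    intro m
    induction m with
    | zero => simp
    | succ k ih =>
      have hm : ((k+1) * (q/p) : ℕ) = (k * (q/p) : ℕ) + (q/p) := by ring
      rw [hm, Nat.cast_add, AddChar.map_add_eq_mul, ih, pow_succ]
  have hξp : ξ ^ p = 1 := by
    rw [← hpow p, Nat.mul_div_cancel' hdvd, ZMod.natCast_self, AddChar.map_zero_eq_one]
  have hξ1 : ξ ≠ 1 := fun h => hg0 ((hχ _).mp h)
  obtain ⟨h1, hp1e⟩ := hodd
  have hh : (p - 1) / 2 = h1 := by omega
  rw [hh]
  have hneg : ∀ j ∈ Finset.range h1, χ (-(((j+1) * (q/p) : ℕ) : ZMod q)) = ξ ^ (p - 1 - j) := by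
    intro j hj
    rw [Finset.mem_range] at hj
    have hadd : ((j+1) * (q/p) + (p-1-j) * (q/p) : ℕ) = p * (q/p) := by
      rw [← add_mul]
      congr 1
      omega
    have hzero : (((j+1) * (q/p) : ℕ) : ZMod q) + (((p-1-j) * (q/p) : ℕ) : ZMod q) = 0 := by
      rw [← Nat.cast_add, hadd, Nat.mul_div_cancel' hdvd, ZMod.natCast_self]
    rw [neg_eq_of_add_eq_zero_right hzero, hpow]
  rw [Finset.sum_congr rfl fun j hj => by rw [hpow (j+1), hneg j hj]]
  have hrev : ∑ j ∈ Finset.range h1, ξ ^ (p - 1 - j) = ∑ j ∈ Finset.range h1, ξ ^ (h1 + 1 + j) := by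
    rw [← Finset.sum_range_reflect (fun j => ξ ^ (h1 + 1 + j)) h1]
    refine Finset.sum_congr rfl fun j hj => ?_
    rw [Finset.mem_range] at hj
    congr 1
    omega
  rw [Finset.sum_add_distrib, hrev]
  have hA : ∑ j ∈ Finset.range h1, ξ ^ (j + 1) = ξ * ∑ j ∈ Finset.range h1, ξ ^ j := by
    rw [Finset.mul_sum]
    exact Finset.sum_congr rfl fun j _ => by ring
  have hB : ∑ j ∈ Finset.range h1, ξ ^ (h1 + 1 + j)
      = ξ ^ h1 * ξ * ∑ j ∈ Finset.range h1, ξ ^ j := by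
    rw [Finset.mul_sum]
    refine Finset.sum_congr rfl fun j _ => ?_
    rw [pow_add, pow_add, pow_one]
  rw [hA, hB]
  have hGm := geom_sum_mul ξ h1
  have hxp : ξ ^ h1 * ξ ^ h1 * ξ = 1 := by
    rw [← hξp, hp1e]
    rw [pow_add, pow_mul, pow_one]
    ring
  have hcancel : (ξ - 1) ≠ 0 := sub_ne_zero.mpr hξ1
  apply mul_right_cancel₀ hcancel
  calc (ξ * ∑ j ∈ Finset.range h1, ξ ^ j + ξ ^ h1 * ξ * ∑ j ∈ Finset.range h1, ξ ^ j) * (ξ - 1)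
      = (ξ + ξ ^ h1 * ξ) * ((∑ j ∈ Finset.range h1, ξ ^ j) * (ξ - 1)) := by ring
    _ = (ξ + ξ ^ h1 * ξ) * (ξ ^ h1 - 1) := by rw [hGm]
    _ = -1 * (ξ - 1) := by linear_combination hxp

lemma two_block (q : ℕ) [NeZero q] (χ : AddChar (ZMod q) ℂ)
    (hχ : ∀ x : ZMod q, χ x = 1 ↔ x = 0) (hq : 3 ≤ q) (hdvd : 2 ∣ q) :
    χ (((q/2 : ℕ) : ZMod q)) + χ (-((q/2 : ℕ) : ZMod q)) = -2 := by
  have hq0 : 0 < q := by omega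
  have hgpos : 0 < q / 2 := Nat.div_pos (by omega) (by norm_num)
  have hglt : q / 2 < q := Nat.div_lt_self hq0 (by norm_num)
  have hg0 : ((q/2 : ℕ) : ZMod q) ≠ 0 := by
    intro h
    rw [ZMod.natCast_eq_zero_iff] at h
    exact absurd (Nat.le_of_dvd hgpos h) (by omega)
  have hgg : ((q/2 : ℕ) : ZMod q) + ((q/2 : ℕ) : ZMod q) = 0 := by
    rw [← Nat.cast_add]
    have : (q/2 + q/2 : ℕ) = q := by omega
    rw [this, ZMod.natCast_self]
  have hneg : -((q/2 : ℕ) : ZMod q) = ((q/2 : ℕ) : ZMod q) := neg_eq_of_add_eq_zero_right hgg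
  have hsq : χ ((q/2 : ℕ) : ZMod q) * χ ((q/2 : ℕ) : ZMod q) = 1 := by
    rw [← AddChar.map_add_eq_mul, hgg, AddChar.map_zero_eq_one]
  have hne1 : χ ((q/2 : ℕ) : ZMod q) ≠ 1 := fun h => hg0 ((hχ _).mp h)
  have hval : χ ((q/2 : ℕ) : ZMod q) = -1 := by
    have hfac : (χ ((q/2 : ℕ) : ZMod q) - 1) * (χ ((q/2 : ℕ) : ZMod q) + 1) = 0 := by
      linear_combination hsq
    rcases mul_eq_zero.mp hfac with h' | h'
    · exact absurd (by linear_combination h') hne1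
    · linear_combination h'
  rw [hneg, hval]
  norm_num

lemma rep_lemma (a b N : ℕ) (ha : 0 < a) (hb : 2 ≤ b) (hcop : Nat.Coprime a b)
    (hN : a * b + 2 ≤ N + a + b) : ∃ s t : ℕ, s * a + t * b = N := by
  haveI : NeZero b := ⟨by omega⟩
  set s := ((N : ZMod b) * (a : ZMod b)⁻¹).val with hs
  have hslt : s < b := ZMod.val_lt _
  have h1 := ZMod.coe_mul_inv_eq_one a hcop
  have hcast : ((s : ℕ) : ZMod b) * (a : ZMod b) = (N : ZMod b) := by
    rw [hs, ZMod.natCast_val, ZMod.cast_id]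
    linear_combination (N : ZMod b) * h1
  have hdvd : (b : ℤ) ∣ (N : ℤ) - s * a := by
    rw [← ZMod.intCast_zmod_eq_zero_iff_dvd]
    push_cast
    linear_combination -hcast
  obtain ⟨k, hk⟩ := hdvd
  have hsa : (s : ℤ) * a ≤ (b - 1) * a := by
    have hs1 : (s : ℤ) ≤ b - 1 := by omega
    exact mul_le_mul_of_nonneg_right hs1 (by positivity)
  have hNZ : (a : ℤ) * b + 2 ≤ (N : ℤ) + a + b := by exact_mod_cast hN
  have hbk : 2 - (b : ℤ) ≤ b * k := by nlinarith
  have hkge : 0 ≤ k := by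
    by_contra hneg
    push_neg at hneg
    have hk1 : k ≤ -1 := by omega
    have := mul_le_mul_of_nonneg_left hk1 (show (0:ℤ) ≤ b by positivity)
    omega
  refine ⟨s, k.toNat, ?_⟩
  have hfin : (s : ℤ) * a + k.toNat * b = N := by
    rw [Int.toNat_of_nonneg hkge]
    linarith [hk]
  exact_mod_cast hfin

lemma sum_fin_get {α : Type*} (L : List α) (f : α → ℂ) :
    ∑ i : Fin L.length, f (L.get i) = (L.map f).sum := by
  induction L with
  | nil => simp
  | cons a l ih =>
    rw [List.map_cons, List.sum_cons, ← ih]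
    exact Fin.sum_univ_succ fun i => f ((a :: l).get i)

lemma map_sum_join_replicate (k : ℕ) {α : Type*} (X : List α) (f : α → ℂ) :
    (((List.replicate k X).flatten).map f).sum = k * (X.map f).sum := by
  induction k with
  | zero => simp
  | succ m ih =>
    rw [List.replicate_succ, List.flatten_cons, List.map_append, List.sum_append, ih]
    push_cast
    ring

lemma length_join_replicate (k : ℕ) {α : Type*} (X : List α) :
    ((List.replicate k X).flatten).length = k * X.length := by
  induction k with
  | zero => simp
  | succ m ih =>
    rw [List.replicate_succ, List.flatten_cons, List.length_append, ih]
    ring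

lemma list_range_map_sum (k : ℕ) (f : ℕ → ℂ) :
    ((List.range k).map f).sum = ∑ j ∈ Finset.range k, f j := by
  induction k with
  | zero => simp
  | succ m ih =>
    rw [List.range_succ, List.map_append, List.sum_append, ih, Finset.sum_range_succ]
    simp

lemma assemble (q : ℕ) [NeZero q] (hq : 3 ≤ q) (χ : AddChar (ZMod q) ℂ)
    (n : ℕ) (L : List (ZMod q)) (hlen : L.length = n)
    (hsum : (L.map (fun x => χ x + χ (-x))).sum = -1) :
    IsAdjEigenvalue (leeGraph n q) (-1) := by
  subst hlen
  apply lee_eigen q hq χ _ (fun i => L.get i)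
  rw [show (∑ i : Fin L.length, (χ (L.get i) + χ (-(L.get i))))
      = ∑ i : Fin L.length, (fun x => χ x + χ (-x)) (L.get i) from rfl,
    sum_fin_get L (fun x => χ x + χ (-x))]
  exact hsum

lemma odd_case (q : ℕ) [NeZero q] (hq3 : 3 ≤ q) (p1 p2 : ℕ) (hp1 : p1.Prime) (hp2 : p2.Prime)
    (h1odd : Odd p1) (h2odd : Odd p2) (hlt : p1 < p2) (hd1 : p1 ∣ q) (hd2 : p2 ∣ q)
    (n : ℕ) (hbound : (p1 - 1) * (p2 - 1) < 2 * n + 1) :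
    IsAdjEigenvalue (leeGraph n q) (-1) := by
  obtain ⟨χ, hχ⟩ := exists_char q
  have hcop : Nat.Coprime p1 p2 := (Nat.coprime_primes hp1 hp2).mpr hlt.ne
  obtain ⟨h1, hp1e⟩ := h1odd
  obtain ⟨h2, hp2e⟩ := h2odd
  have hb1 : (p1 - 1) * (p2 - 1) = 4 * (h1 * h2) := by
    have e1 : p1 - 1 = 2 * h1 := by omega
    have e2 : p2 - 1 = 2 * h2 := by omega
    rw [e1, e2]; ring
  have hb2 : p1 * p2 = 4 * (h1 * h2) + 2 * h1 + 2 * h2 + 1 := by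
    rw [hp1e, hp2e]; ring
  have hNbound : p1 * p2 + 2 ≤ (2 * n + 1) + p1 + p2 := by
    obtain ⟨H, hH⟩ : ∃ H, H = h1 * h2 := ⟨_, rfl⟩
    rw [← hH] at hb1 hb2
    omega
  obtain ⟨s, t, hst⟩ := rep_lemma p1 p2 (2 * n + 1) hp1.pos (by omega) hcop hNbound
  have e1 : s * p1 = 2 * (s * h1) + s := by rw [hp1e]; ring
  have e2 : t * p2 = 2 * (t * h2) + t := by rw [hp2e]; ring
  obtain ⟨A, hA⟩ : ∃ A, A = s * h1 := ⟨_, rfl⟩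
  obtain ⟨B, hB⟩ : ∃ B, B = t * h2 := ⟨_, rfl⟩
  rw [← hA] at e1
  rw [← hB] at e2
  have hst' : 2 * A + s + (2 * B + t) = 2 * n + 1 := by rw [e1, e2] at hst; omega
  set zz := (s + t - 1) / 2 with hzz
  have hodd_st : s + t = 2 * zz + 1 := by omega
  have hlen_eq : A + B + zz = n := by omega
  set X1 : List (ZMod q) := (List.range h1).map (fun j => (((j+1) * (q/p1) : ℕ) : ZMod q)) with hX1
  set X2 : List (ZMod q) := (List.range h2).map (fun j => (((j+1) * (q/p2) : ℕ) : ZMod q)) with hX2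
  have hX1sum : (X1.map (fun x => χ x + χ (-x))).sum = -1 := by
    rw [hX1, List.map_map, list_range_map_sum]
    have hhb := half_block q χ hχ p1 hp1 ⟨h1, hp1e⟩ hd1
    have hh : (p1 - 1) / 2 = h1 := by omega
    rw [hh] at hhb
    exact hhb
  have hX2sum : (X2.map (fun x => χ x + χ (-x))).sum = -1 := by
    rw [hX2, List.map_map, list_range_map_sum]
    have hhb := half_block q χ hχ p2 hp2 ⟨h2, hp2e⟩ hd2
    have hh : (p2 - 1) / 2 = h2 := by omega
    rw [hh] at hhb
    exact hhb
  set L : List (ZMod q) := (List.replicate s X1).flatten ++ (List.replicate t X2).flatten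
      ++ List.replicate zz (0 : ZMod q) with hL
  apply assemble q hq3 χ n L
  · rw [hL]
    simp only [List.length_append, length_join_replicate, List.length_replicate, hX1, hX2,
      List.length_map, List.length_range]
    rw [hA, hB] at hlen_eq
    omega
  · rw [hL]
    rw [List.map_append, List.map_append, List.sum_append, List.sum_append,
      map_sum_join_replicate, map_sum_join_replicate, hX1sum, hX2sum,
      List.map_replicate, List.sum_replicate]
    simp only [neg_zero, AddChar.map_zero_eq_one]
    rw [nsmul_eq_mul]
    have hcast := congrArg (fun m : ℕ => (m : ℂ)) hodd_st
    push_cast at hcast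
    linear_combination -hcast

lemma even_case (q : ℕ) [NeZero q] (hq3 : 3 ≤ q) (p2 : ℕ) (hp2 : p2.Prime)
    (h2odd : Odd p2) (hd1 : 2 ∣ q) (hd2 : p2 ∣ q) (hp2gt : 2 < p2)
    (n : ℕ) (hbound : 3 * (p2 - 1) < 2 * n + 1) :
    IsAdjEigenvalue (leeGraph n q) (-1) := by
  obtain ⟨χ, hχ⟩ := exists_char q
  have hcop : Nat.Coprime 4 p2 := by
    have h2 : Nat.Coprime 2 p2 := (Nat.coprime_primes Nat.prime_two hp2).mpr (by omega)
    have := h2.pow_left 2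
    norm_num at this
    exact this
  obtain ⟨h2, hp2e⟩ := h2odd
  have hNbound : 4 * p2 + 2 ≤ (2 * n + 1) + 4 + p2 := by omega
  obtain ⟨u, t, hut⟩ := rep_lemma 4 p2 (2 * n + 1) (by norm_num) (by omega) hcop hNbound
  have e2 : t * p2 = 2 * (t * h2) + t := by rw [hp2e]; ring
  obtain ⟨B, hB⟩ : ∃ B, B = t * h2 := ⟨_, rfl⟩
  rw [← hB] at e2
  have hut' : 4 * u + (2 * B + t) = 2 * n + 1 := by rw [e2] at hut; omega
  set zz := (2 * u + t - 1) / 2 with hzz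
  have hodd_t : 2 * u + t = 2 * zz + 1 := by omega
  have hlen_eq : u + B + zz = n := by omega
  set X2 : List (ZMod q) := (List.range h2).map (fun j => (((j+1) * (q/p2) : ℕ) : ZMod q)) with hX2
  have hX2sum : (X2.map (fun x => χ x + χ (-x))).sum = -1 := by
    rw [hX2, List.map_map, list_range_map_sum]
    have hhb := half_block q χ hχ p2 hp2 ⟨h2, hp2e⟩ hd2
    have hh : (p2 - 1) / 2 = h2 := by omega
    rw [hh] at hhb
    exact hhb
  have hg2 : χ (((q/2 : ℕ) : ZMod q)) + χ (-((q/2 : ℕ) : ZMod q)) = -2 :=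
    two_block q χ hχ hq3 hd1
  set L : List (ZMod q) := List.replicate u (((q/2 : ℕ) : ZMod q))
      ++ (List.replicate t X2).flatten ++ List.replicate zz (0 : ZMod q) with hL
  apply assemble q hq3 χ n L
  · rw [hL]
    simp only [List.length_append, length_join_replicate, List.length_replicate, hX2,
      List.length_map, List.length_range]
    rw [hB] at hlen_eq
    omega
  · rw [hL]
    rw [List.map_append, List.map_append, List.sum_append, List.sum_append,
      map_sum_join_replicate, hX2sum, List.map_replicate, List.sum_replicate,
      List.map_replicate, List.sum_replicate]
    simp only [neg_zero, AddChar.map_zero_eq_one]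
    rw [hg2, nsmul_eq_mul, nsmul_eq_mul]
    have hcast := congrArg (fun m : ℕ => (m : ℂ)) hodd_t
    push_cast at hcast
    linear_combination -hcast

/-- if `q = p₁^{a₁} ⋯ p_r^{a_r}` with `r ≥ 2` primes `p₁ < ⋯ < p_r`, then
`−1` is an eigenvalue of `G(n,q)` for every `n > (−1 + (2p₁−1)(p₂−1))/2` when `q` is even,
and every `n > (−1 + (p₁−1)(p₂−1))/2` when `q` is odd. -/
theorem stmt15 (q : ℕ) [NeZero q] (hq : 2 ≤ q) (r : ℕ) (hr : 2 ≤ r) (p a : Fin r → ℕ)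
    (hp : ∀ i, (p i).Prime) (hmono : StrictMono p) (ha : ∀ i, 0 < a i)
    (hfac : q = ∏ i, p i ^ a i) (n : ℕ) :
    (Even q → (2 * p ⟨0, by omega⟩ - 1) * (p ⟨1, by omega⟩ - 1) < 2 * n + 1 →
      IsAdjEigenvalue (leeGraph n q) (-1)) ∧
    (Odd q → (p ⟨0, by omega⟩ - 1) * (p ⟨1, by omega⟩ - 1) < 2 * n + 1 →
      IsAdjEigenvalue (leeGraph n q) (-1)) := by
  have hr0 : (0 : ℕ) < r := by omega
  have hr1 : (1 : ℕ) < r := by omega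
  have hcan0 : ∀ (h : (0 : ℕ) < r), p ⟨0, h⟩ = p ⟨0, hr0⟩ := fun _ => rfl
  have hcan1 : ∀ (h : (1 : ℕ) < r), p ⟨1, h⟩ = p ⟨1, hr1⟩ := fun _ => rfl
  have hp1 : (p ⟨0, hr0⟩).Prime := hp _
  have hp2 : (p ⟨1, hr1⟩).Prime := hp _
  have hlt : p ⟨0, hr0⟩ < p ⟨1, hr1⟩ := hmono (by simp [Fin.lt_def])
  have hdvd : ∀ i : Fin r, p i ∣ q := by
    intro i
    rw [hfac]
    exact dvd_trans (dvd_pow_self (p i) (ha i).ne') (Finset.dvd_prod_of_mem _ (Finset.mem_univ i))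
  have hq3 : 3 ≤ q := by
    have h6 : p ⟨0, hr0⟩ * p ⟨1, hr1⟩ ∣ q :=
      Nat.Coprime.mul_dvd_of_dvd_of_dvd ((Nat.coprime_primes hp1 hp2).mpr hlt.ne)
        (hdvd _) (hdvd _)
    have hle := Nat.le_of_dvd (by omega) h6
    have h2a := hp1.two_le
    have h2b := hp2.two_le
    have h4 : 2 * 2 ≤ p ⟨0, hr0⟩ * p ⟨1, hr1⟩ := Nat.mul_le_mul h2a h2b
    omega
  constructor
  · intro hqe hbound
    simp only [hcan0, hcan1] at hbound
    have h2q : (2 : ℕ) ∣ q := hqe.two_dvd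
    have hp1eq : p ⟨0, hr0⟩ = 2 := by
      obtain ⟨i, -, hi⟩ := (Nat.prime_two).prime.exists_mem_finset_dvd (hfac ▸ h2q)
      have h2pi : (2 : ℕ) = p i :=
        (Nat.prime_dvd_prime_iff_eq Nat.prime_two (hp i)).mp
          (Nat.Prime.dvd_of_dvd_pow Nat.prime_two hi)
      have hle : p ⟨0, hr0⟩ ≤ p i := hmono.monotone (by simp [Fin.le_def])
      have h2le := hp1.two_le
      omega
    have hgt : 2 < p ⟨1, hr1⟩ := by omega
    have hodd2 : Odd (p ⟨1, hr1⟩) := hp2.odd_of_ne_two (by omega)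
    apply even_case q hq3 _ hp2 hodd2 h2q (hdvd _) hgt n
    rw [hp1eq] at hbound
    norm_num at hbound
    omega
  · intro hqo hbound
    simp only [hcan0, hcan1] at hbound
    have hodd1 : Odd (p ⟨0, hr0⟩) := by
      refine hp1.odd_of_ne_two fun h => ?_
      have h2q : (2 : ℕ) ∣ q := h ▸ hdvd _
      obtain ⟨k, hk⟩ := h2q
      rw [Nat.odd_iff] at hqo
      omega
    have hne2 : p ⟨1, hr1⟩ ≠ 2 := by
      have h2le := hp1.two_le
      omega
    have hodd2 : Odd (p ⟨1, hr1⟩) := hp2.odd_of_ne_two hne2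
    exact odd_case q hq3 _ _ hp1 hp2 hodd1 hodd2 hlt (hdvd _) (hdvd _) n hbound
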